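/- arXiv:2603.25177 — 2 statements merged into one kernel-verified Lean document; each statement's English description precedes it below -/
import Mathlib

section
/- Let α ∈ (1,3), let μ₁ be the standard Gaussian measure on ℝ (density (2π)^{−1/2} e^{−x²/2}) and let μ₂ be the probability measure on ℝ with density c_α (1+|y|^α)^{−1}, where c_α := (∫_ℝ (1+|y|^α)^{−1} dy)^{−1}. Let 1 < p < q < ∞ and let ω satisfy (α−1)/q ≤ ω < (α−1)/p. Then the function g(ξ) = |ξ|^ω satisfies ∫_ℝ |g|^p d(μ₁∗μ₂) < ∞, while ‖g‖_{p,q} = ∞ with respect to (μ₁, μ₂). In particular g ∈ L^p(ℝ, μ₁∗μ₂) but g ∉ 𝒳_{p,q}(ℝ; μ₁, μ₂). -/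
open MeasureTheory ENNReal ProbabilityTheory

/-- Convolution of two measures: the pushforward of the product measure under addition. -/
noncomputable def mconv {E : Type*} [MeasurableSpace E] [Add E]
    (μ ν : Measure E) : Measure E :=
  (μ.prod ν).map (fun z => z.1 + z.2)

/-- The mixed norm `‖f‖_{p,q}` with respect to `(μ₁, μ₂)`, with values in `[0,∞]`. -/
noncomputable def mixedNorm {E : Type*} [MeasurableSpace E] [Add E]
    (p q : ℝ) (μ₁ μ₂ : Measure E) (f : E → ℝ) : ℝ≥0∞ :=
  (∫⁻ y, (∫⁻ x, (ENNReal.ofReal |f (x + y)|) ^ p ∂μ₁) ^ (q / p) ∂μ₂) ^ (1 / q)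

/-- The standard Gaussian measure on `ℝ`. -/
noncomputable def stdGaussian : Measure ℝ := gaussianReal 0 1

/-- The normalization constant `c_α = (∫ (1+|y|^α)⁻¹ dy)⁻¹`. -/
noncomputable def cAlpha (α : ℝ) : ℝ := (∫ y : ℝ, (1 + |y| ^ α)⁻¹)⁻¹

/-- The probability measure on `ℝ` with density `c_α (1+|y|^α)⁻¹`. -/
noncomputable def polyMeasure (α : ℝ) : Measure ℝ :=
  MeasureTheory.volume.withDensity fun y => ENNReal.ofReal (cAlpha α * (1 + |y| ^ α)⁻¹)

/-! With `r = ω p < α - 1 ≤ t = ω q`: the Gaussian has moments of every order and the tail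
`|y|^{-α}` of `μ₂` gives it a finite `r`-th moment, so `id ∈ L^r(μ₁)`, `id ∈ L^r(μ₂)`, and
Minkowski's inequality on the product puts `x + y` in `L^r(μ₁ ⊗ μ₂)`, i.e. `id ∈ L^r(μ₁ ∗ μ₂)`.
For the mixed norm, `|x + y| ≥ y / 2` for `|x| ≤ 1 ≤ y / 2`, so the inner integral is at least
`μ₁[-1,1] (y/2)^r`; the outer integrand then grows like `y^t`, which is not `μ₂`-integrable
since `t - α ≥ -1`. -/

open Set

lemma integrable_comp_abs_of_integrableOn_Ioi {f : ℝ → ℝ} (hf : IntegrableOn f (Ioi 0)) :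
    Integrable fun x => f |x| := by
  have h_Ioi : IntegrableOn (fun x => f |x|) (Ioi 0) :=
    hf.congr_fun (fun x hx => by rw [abs_of_pos hx]) measurableSet_Ioi
  have h_Iio : IntegrableOn (fun x => f |x|) (Iio 0) := by
    rw [← (Measure.measurePreserving_neg (volume : Measure ℝ)).integrableOn_comp_preimage
      (Homeomorph.neg ℝ).measurableEmbedding]
    simpa only [Function.comp_def, abs_neg, neg_preimage, neg_Iio, neg_zero] using h_Ioi
  have h_zero : IntegrableOn (fun x => f |x|) {0} := by simp
  rw [← integrableOn_univ, ← Iio_union_Ici, ← Ioi_insert, integrableOn_union, insert_eq,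
    integrableOn_union]
  exact ⟨h_Iio, h_zero, h_Ioi⟩

lemma integrableOn_Ioi_rpow_mul_one_add_rpow_inv {α r : ℝ} (hr : 0 ≤ r) (hrα : r < α - 1) :
    IntegrableOn (fun u : ℝ => u ^ r * (1 + u ^ α)⁻¹) (Ioi 0) := by
  have hmeas : AEStronglyMeasurable (fun u : ℝ => u ^ r * (1 + u ^ α)⁻¹) volume := by
    fun_prop
  rw [← Ioc_union_Ioi_eq_Ioi zero_le_one, integrableOn_union]
  constructor
  · refine Measure.integrableOn_of_bounded (M := 1) (by simp) hmeas ?_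
    filter_upwards [ae_restrict_mem measurableSet_Ioc] with u ⟨hu₀, hu₁⟩
    have hur : u ^ r ≤ 1 := Real.rpow_le_one hu₀.le hu₁ hr
    have huα : 1 ≤ 1 + u ^ α := by linarith [Real.rpow_nonneg hu₀.le α]
    rw [Real.norm_of_nonneg (by positivity)]
    calc u ^ r * (1 + u ^ α)⁻¹ ≤ 1 * 1 :=
          mul_le_mul hur (inv_le_one_of_one_le₀ huα) (by positivity) zero_le_one
      _ = 1 := one_mul 1
  · refine Integrable.mono' (integrableOn_Ioi_rpow_of_lt (a := r - α) (by linarith) one_pos)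
      hmeas.restrict ?_
    filter_upwards [ae_restrict_mem measurableSet_Ioi] with u (hu : 1 < u)
    have hu₀ : 0 < u := one_pos.trans hu
    rw [Real.norm_of_nonneg (by positivity)]
    calc u ^ r * (1 + u ^ α)⁻¹ ≤ u ^ r * (u ^ α)⁻¹ := by gcongr; linarith
      _ = u ^ (r - α) := by rw [Real.rpow_sub hu₀, div_eq_mul_inv]

lemma integrable_abs_rpow_mul_one_add_abs_rpow_inv {α r : ℝ} (hr : 0 ≤ r) (hrα : r < α - 1) :
    Integrable fun y : ℝ => |y| ^ r * (1 + |y| ^ α)⁻¹ :=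
  integrable_comp_abs_of_integrableOn_Ioi (integrableOn_Ioi_rpow_mul_one_add_rpow_inv hr hrα)

lemma integrable_one_add_abs_rpow_inv {α : ℝ} (hα : 1 < α) :
    Integrable fun y : ℝ => (1 + |y| ^ α)⁻¹ := by
  simpa using integrable_abs_rpow_mul_one_add_abs_rpow_inv le_rfl (sub_pos.2 hα)

lemma cAlpha_pos {α : ℝ} (hα : 1 < α) : 0 < cAlpha α := by
  refine inv_pos.2 (integral_pos_iff_support_of_nonneg (fun y => by positivity)
    (integrable_one_add_abs_rpow_inv hα) |>.2 ?_)
  have : Function.support (fun y : ℝ => (1 + |y| ^ α)⁻¹) = univ :=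
    Function.support_eq_univ fun y => by positivity
  simp [this]

lemma measurable_polyMeasure_density (α : ℝ) :
    Measurable fun y : ℝ => ENNReal.ofReal (cAlpha α * (1 + |y| ^ α)⁻¹) := by
  fun_prop

lemma isFiniteMeasure_polyMeasure {α : ℝ} (hα : 1 < α) : IsFiniteMeasure (polyMeasure α) :=
  isFiniteMeasure_withDensity_ofReal ((integrable_one_add_abs_rpow_inv hα).const_mul _).2

lemma memLp_id_polyMeasure {α : ℝ} (hα : 1 < α) {r : NNReal} (hr : (r : ℝ) < α - 1) :
    MemLp id r (polyMeasure α) := by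
  rcases eq_or_ne r 0 with rfl | hr₀
  · simpa using aestronglyMeasurable_id
  refine ⟨aestronglyMeasurable_id, (eLpNorm_lt_top_iff_lintegral_rpow_enorm_lt_top
    (by simpa using hr₀) ENNReal.coe_ne_top).2 ?_⟩
  have h_eq : ∀ y : ℝ, (ENNReal.ofReal (cAlpha α * (1 + |y| ^ α)⁻¹) * ‖y‖ₑ ^ (r : ℝ))
      = ENNReal.ofReal (cAlpha α * (|y| ^ (r : ℝ) * (1 + |y| ^ α)⁻¹)) := fun y => by
    have := cAlpha_pos hα
    rw [Real.enorm_eq_ofReal_abs, ENNReal.ofReal_rpow_of_nonneg (abs_nonneg y) r.coe_nonneg,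
      ← ENNReal.ofReal_mul (by positivity)]
    ring_nf
  rw [polyMeasure, lintegral_withDensity_eq_lintegral_mul _ (measurable_polyMeasure_density α)
    (by fun_prop)]
  simpa only [ENNReal.coe_toReal, Pi.mul_apply, id, h_eq] using
    ((integrable_abs_rpow_mul_one_add_abs_rpow_inv r.coe_nonneg hr).const_mul
      (cAlpha α)).lintegral_lt_top

lemma setLIntegral_Ioi_ofReal_rpow_eq_top {a s : ℝ} (ha : 0 < a) (hs : -1 ≤ s) :
    ∫⁻ y in Ioi a, ENNReal.ofReal (y ^ s) = ⊤ := by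
  by_contra h
  have : IntegrableOn (fun y : ℝ => y ^ s) (Ioi a) :=
    ⟨by fun_prop, (hasFiniteIntegral_iff_ofReal (ae_restrict_of_forall_mem measurableSet_Ioi
      fun y (hy : a < y) => Real.rpow_nonneg (ha.trans hy).le s)).2 (lt_top_iff_ne_top.2 h)⟩
  exact hs.not_gt ((integrableOn_Ioi_rpow_iff ha).1 this)

lemma setLIntegral_Ioi_rpow_polyMeasure_eq_top {α t a : ℝ} (hα : 1 < α) (ht : α - 1 ≤ t)
    (ha : 1 ≤ a) : ∫⁻ y in Ioi a, ENNReal.ofReal y ^ t ∂polyMeasure α = ⊤ := by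
  have hc := cAlpha_pos hα
  have h_le : ∀ y ∈ Ioi a, ENNReal.ofReal (cAlpha α / 2 * y ^ (t - α))
      ≤ ENNReal.ofReal (cAlpha α * (1 + |y| ^ α)⁻¹) * ENNReal.ofReal y ^ t := fun y hy => by
    have hy₁ : 1 ≤ y := ha.trans hy.le
    have hy₀ : 0 < y := one_pos.trans_le hy₁
    have hyα : 1 ≤ y ^ α := Real.one_le_rpow hy₁ (by linarith)
    rw [ENNReal.ofReal_rpow_of_pos hy₀, ← ENNReal.ofReal_mul (by positivity), abs_of_pos hy₀]
    refine ENNReal.ofReal_le_ofReal ?_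
    calc cAlpha α / 2 * y ^ (t - α) = cAlpha α * (2 * y ^ α)⁻¹ * y ^ t := by
          rw [Real.rpow_sub hy₀]; field_simp
      _ ≤ cAlpha α * (1 + y ^ α)⁻¹ * y ^ t := by gcongr; linarith
  rw [eq_top_iff, polyMeasure, setLIntegral_withDensity_eq_setLIntegral_mul _
    (measurable_polyMeasure_density α) (by fun_prop) measurableSet_Ioi]
  calc ⊤ = ENNReal.ofReal (cAlpha α / 2) * ∫⁻ y in Ioi a, ENNReal.ofReal (y ^ (t - α)) := by
        rw [setLIntegral_Ioi_ofReal_rpow_eq_top (one_pos.trans_le ha) (by linarith),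
          ENNReal.mul_top (by simpa using hc)]
    _ = ∫⁻ y in Ioi a, ENNReal.ofReal (cAlpha α / 2 * y ^ (t - α)) := by
        rw [← lintegral_const_mul' _ _ ENNReal.ofReal_ne_top]
        simp_rw [ENNReal.ofReal_mul (by positivity : 0 ≤ cAlpha α / 2)]
    _ ≤ _ := setLIntegral_mono (by fun_prop) h_le

lemma memLp_id_mconv {E : Type*} [NormedAddCommGroup E] [MeasurableSpace E] [BorelSpace E]
    [SecondCountableTopology E] {μ ν : Measure E} [IsFiniteMeasure μ] [IsFiniteMeasure ν]
    {p : ℝ≥0∞} (hμ : MemLp id p μ) (hν : MemLp id p ν) : MemLp id p (mconv μ ν) := by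
  rw [mconv, memLp_map_measure_iff aestronglyMeasurable_id (by fun_prop)]
  exact (hμ.comp_fst ν).add (hν.comp_snd μ)

lemma ofReal_abs_abs_rpow_rpow (z : ℝ) {ω p : ℝ} (hω : 0 ≤ ω) :
    ENNReal.ofReal |(|z| ^ ω)| ^ p = ‖z‖ₑ ^ (ω * p) := by
  rw [abs_of_nonneg (by positivity), ← ENNReal.ofReal_rpow_of_nonneg (abs_nonneg z) hω,
    ← ENNReal.rpow_mul, Real.enorm_eq_ofReal_abs]

lemma measure_Icc_mul_rpow_le_lintegral_enorm_add_rpow (μ : Measure ℝ) {r y : ℝ} (hr : 0 ≤ r)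
    (hy : 2 ≤ y) :
    μ (Icc (-1) 1) * ENNReal.ofReal y ^ r ≤ 2 ^ r * ∫⁻ x, ‖x + y‖ₑ ^ r ∂μ := by
  have h_le : ∀ x ∈ Icc (-1 : ℝ) 1, ENNReal.ofReal y ^ r ≤ 2 ^ r * ‖x + y‖ₑ ^ r := by
    rintro x ⟨hx, -⟩
    rw [← ENNReal.mul_rpow_of_nonneg _ _ hr, Real.enorm_eq_ofReal_abs,
      ← ENNReal.ofReal_ofNat 2, ← ENNReal.ofReal_mul zero_le_two]
    gcongr
    rw [abs_of_nonneg (by linarith)]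
    linarith
  calc μ (Icc (-1) 1) * ENNReal.ofReal y ^ r
      = ∫⁻ _ in Icc (-1 : ℝ) 1, ENNReal.ofReal y ^ r ∂μ := by rw [setLIntegral_const, mul_comm]
    _ ≤ ∫⁻ x in Icc (-1 : ℝ) 1, 2 ^ r * ‖x + y‖ₑ ^ r ∂μ := setLIntegral_mono' measurableSet_Icc h_le
    _ ≤ ∫⁻ x, 2 ^ r * ‖x + y‖ₑ ^ r ∂μ := setLIntegral_le_lintegral _ _
    _ = 2 ^ r * ∫⁻ x, ‖x + y‖ₑ ^ r ∂μ := lintegral_const_mul' _ _ (by simp)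

lemma mixedNorm_abs_rpow_eq_top {μ₁ μ₂ : Measure ℝ} {p q ω : ℝ} (hp : 0 < p) (hq : 0 < q)
    (hω : 0 ≤ ω) (h₁ : μ₁ (Icc (-1) 1) ≠ 0)
    (h₂ : ∫⁻ y in Ioi 2, ENNReal.ofReal y ^ (ω * q) ∂μ₂ = ⊤) :
    mixedNorm p q μ₁ μ₂ (fun ξ => |ξ| ^ ω) = ⊤ := by
  set s := q / p
  set J : ℝ → ℝ≥0∞ := fun y => ∫⁻ x, ‖x + y‖ₑ ^ (ω * p) ∂μ₁
  have hs : 0 ≤ s := by positivity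
  have hωps : ω * p * s = ω * q := by simp only [s]; field_simp
  have h_le : ∀ y ∈ Ioi (2 : ℝ), μ₁ (Icc (-1) 1) ^ s * ENNReal.ofReal y ^ (ω * q)
      ≤ 2 ^ (ω * q) * J y ^ s := fun y hy => by
    have := ENNReal.rpow_le_rpow (measure_Icc_mul_rpow_le_lintegral_enorm_add_rpow μ₁
      (by positivity : 0 ≤ ω * p) (le_of_lt hy)) hs
    rwa [ENNReal.mul_rpow_of_nonneg _ _ hs, ENNReal.mul_rpow_of_nonneg _ _ hs,
      ← ENNReal.rpow_mul, ← ENNReal.rpow_mul, hωps] at this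
  have h_top : ∫⁻ y, J y ^ s ∂μ₂ = ⊤ := by
    have h_two : (2 : ℝ≥0∞) ^ (ω * q) ≠ ⊤ := by simp [ENNReal.rpow_eq_top_iff]
    refine ((ENNReal.mul_eq_top.1 (eq_top_iff.2 ?_)).resolve_right fun h => h_two h.1).2
    calc ⊤ = μ₁ (Icc (-1) 1) ^ s * ∫⁻ y in Ioi 2, ENNReal.ofReal y ^ (ω * q) ∂μ₂ := by
          rw [h₂, ENNReal.mul_top (by simp [ENNReal.rpow_eq_zero_iff, h₁, hs])]
      _ ≤ ∫⁻ y in Ioi 2, 2 ^ (ω * q) * J y ^ s ∂μ₂ := by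
          rw [← lintegral_const_mul'' _ (by fun_prop)]
          exact setLIntegral_mono' measurableSet_Ioi h_le
      _ ≤ ∫⁻ y, 2 ^ (ω * q) * J y ^ s ∂μ₂ := setLIntegral_le_lintegral _ _
      _ = 2 ^ (ω * q) * ∫⁻ y, J y ^ s ∂μ₂ := lintegral_const_mul' _ _ h_two
  simp_rw [mixedNorm, ofReal_abs_abs_rpow_rpow _ hω]
  rw [h_top]
  exact ENNReal.top_rpow_of_pos (by positivity)

instance : IsProbabilityMeasure _root_.stdGaussian := by
  unfold _root_.stdGaussian; infer_instance

lemma stdGaussian_Icc_ne_zero : _root_.stdGaussian (Icc (-1) 1) ≠ 0 := fun h =>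
  absurd (gaussianReal_absolutelyContinuous' 0 one_ne_zero h) (by simp)

theorem rpow_mem_Lp_not_X_general (α p q ω : ℝ)
    (hα₁ : 1 < α) (hp : 1 < p) (hpq : p < q)
    (hω₁ : (α - 1) / q ≤ ω) (hω₂ : ω < (α - 1) / p) :
    (∫⁻ z, (ENNReal.ofReal (abs (|z| ^ ω))) ^ p ∂(mconv stdGaussian (polyMeasure α))) < ⊤ ∧
    mixedNorm p q stdGaussian (polyMeasure α) (fun ξ => |ξ| ^ ω) = ⊤ := by
  have hp₀ : 0 < p := one_pos.trans hp
  have hq₀ : 0 < q := hp₀.trans hpq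
  have hω : 0 < ω := (div_pos (by linarith) hq₀).trans_le hω₁
  have hωp : 0 < ω * p := by positivity
  refine ⟨?_, mixedNorm_abs_rpow_eq_top hp₀ hq₀ hω.le stdGaussian_Icc_ne_zero
    (setLIntegral_Ioi_rpow_polyMeasure_eq_top hα₁ ((div_le_iff₀ hq₀).1 hω₁) one_le_two)⟩
  have := isFiniteMeasure_polyMeasure hα₁
  have hmem : MemLp id (ENNReal.ofReal (ω * p)) (mconv stdGaussian (polyMeasure α)) :=
    memLp_id_mconv (memLp_id_gaussianReal _)
      (memLp_id_polyMeasure hα₁ (by simpa [hωp.le] using (lt_div_iff₀ hp₀).1 hω₂))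
  simp_rw [ofReal_abs_abs_rpow_rpow _ hω.le]
  simpa [hωp, hωp.le] using lintegral_rpow_enorm_lt_top_of_eLpNorm_lt_top
    (by simpa using hωp) ENNReal.ofReal_ne_top hmem.eLpNorm_lt_top

/-- For `α ∈ (1,3)`, `1 < p < q < ∞` and `(α−1)/q ≤ ω < (α−1)/p`, the function `ξ ↦ |ξ|^ω`
lies in `L^p` of the convolution `stdGaussian ∗ polyMeasure α` but has infinite mixed
`(p,q)`-norm with respect to `(stdGaussian, polyMeasure α)`. -/
theorem rpow_mem_Lp_not_X (α p q ω : ℝ)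
    (hα₁ : 1 < α) (hα₃ : α < 3) (hp : 1 < p) (hpq : p < q)
    (hω₁ : (α - 1) / q ≤ ω) (hω₂ : ω < (α - 1) / p) :
    (∫⁻ z, (ENNReal.ofReal (abs (|z| ^ ω))) ^ p ∂(mconv stdGaussian (polyMeasure α))) < ⊤ ∧
    mixedNorm p q stdGaussian (polyMeasure α) (fun ξ => |ξ| ^ ω) = ⊤ :=
  rpow_mem_Lp_not_X_general α p q ω hα₁ hp hpq hω₁ hω₂
end

section
/- Let E be a separable real Banach space, let T : E → E be a continuous linear operator, and let γ, π, ρ_γ, ρ_π be Borel probability measures on E such that ((γ ∘ T⁻¹) ∗ ρ_γ) = γ and ((π ∘ T⁻¹) ∗ ρ_π) = π. Let 1 < r ≤ p < ∞ and assume the hypercontractivity of the γ-factor: for every bounded Borel g : E → ℝ, (∫_E |P_T^γ g|^p dγ)^{1/p} ≤ (∫_E |g|^r dγ)^{1/r}, where P_T^γ g(x) := ∫_E g(T(x)+z) dρ_γ(z). Then for every bounded Borel f : E → ℝ, setting P_T f(x) := ∫_E f(T(x)+z) d(ρ_γ∗ρ_π)(z), one has ‖P_T f‖_{p,r} ≤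 (∫_E |f|^r d(γ∗π))^{1/r}, where the mixed norm ‖·‖_{p,r} is taken with respect to (γ, π) (inner exponent p over γ, outer exponent r over π). -/
/-! Fix the `π`-variable `y`. Since `T` is additive, `P_T f (x + y)` is the `ρ_π`-average over `v`
of `P_T^γ` applied to the translate `f (· + T y + v)`, evaluated at `x`. Minkowski's integral
inequality followed by hypercontractivity bounds the `L^p(γ)`-norm in `x` by the `ρ_π`-average of
`‖f (· + T y + v)‖_{L^r(γ)}`, and Jensen's inequality bounds its `r`-th power by the
`ρ_π`-average of `‖f (· + T y + v)‖_{L^r(γ)}^r`. Integrating in `y` against `π`, the invariance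
`(π ∘ T⁻¹) ∗ ρ_π = π` turns the right-hand side into `∫∫ |f (x + w)|^r dγ(x) dπ(w)`, which is
`‖f‖_{L^r(γ ∗ π)}^r`. -/

open MeasureTheory ENNReal

section Inequalities

variable {α β : Type*} [MeasurableSpace α] [MeasurableSpace β] {μ : Measure α} {ν : Measure β}

theorem rpow_lintegral_rpow_one_div_le [IsProbabilityMeasure μ] {F : α → ℝ≥0∞}
    (hF : AEMeasurable F μ) {r : ℝ} (hr : 1 < r) :
    (∫⁻ x, F x ^ (1 / r) ∂μ) ^ r ≤ ∫⁻ x, F x ∂μ := by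
  have hr0 : r ≠ 0 := (zero_lt_one.trans hr).ne'
  have hHolder := ENNReal.lintegral_mul_le_Lp_mul_Lq μ (.conjExponent hr)
    (hF.pow_const (1 / r)) (aemeasurable_const (b := (1 : ℝ≥0∞)))
  simp only [Pi.mul_apply, mul_one, one_rpow, lintegral_const, measure_univ, ← rpow_mul,
    one_div_mul_cancel hr0, rpow_one] at hHolder
  calc (∫⁻ x, F x ^ (1 / r) ∂μ) ^ r ≤ ((∫⁻ x, F x ∂μ) ^ (1 / r)) ^ r :=
        rpow_le_rpow hHolder (zero_lt_one.trans hr).le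
    _ = ∫⁻ x, F x ∂μ := by rw [← rpow_mul, one_div_mul_cancel hr0, rpow_one]

theorem lintegral_Lp_lintegral_le [SFinite μ] [SFinite ν] {p : ℝ} (hp : 1 < p)
    {F : α → β → ℝ≥0∞} (hF : Measurable (Function.uncurry F))
    (hA : ∫⁻ x, (∫⁻ y, F x y ∂ν) ^ p ∂μ ≠ ∞) :
    (∫⁻ x, (∫⁻ y, F x y ∂ν) ^ p ∂μ) ^ (1 / p)
      ≤ ∫⁻ y, (∫⁻ x, F x y ^ p ∂μ) ^ (1 / p) ∂ν := by
  have hpq := Real.HolderConjugate.conjExponent hp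
  set q := p.conjExponent
  set I : α → ℝ≥0∞ := fun x => ∫⁻ y, F x y ∂ν
  set A := ∫⁻ x, I x ^ p ∂μ
  have hI : Measurable I := hF.lintegral_prod_right'
  have hAq : A ^ (1 / q) ≠ ∞ := rpow_ne_top_of_nonneg hpq.symm.one_div_nonneg hA
  -- Write `A = ∫∫ I^(p-1) F`, swap the integrals and apply Hölder in `x`.
  have key : A ^ (1 / q) * A ^ (1 / p)
      ≤ A ^ (1 / q) * ∫⁻ y, (∫⁻ x, F x y ^ p ∂μ) ^ (1 / p) ∂ν := calc
    A ^ (1 / q) * A ^ (1 / p) = A := by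
      rw [← rpow_add_of_nonneg _ _ hpq.symm.one_div_nonneg hpq.one_div_nonneg, one_div, one_div,
        add_comm, hpq.inv_add_inv_eq_one, rpow_one]
    _ = ∫⁻ x, ∫⁻ y, I x ^ (p - 1) * F x y ∂ν ∂μ := by
      refine lintegral_congr fun x => ?_
      rw [lintegral_const_mul _ hF.of_uncurry_left]
      conv_lhs =>
        rw [← sub_add_cancel p 1, rpow_add_of_nonneg _ _ (by linarith) zero_le_one, rpow_one]
    _ = ∫⁻ y, ∫⁻ x, I x ^ (p - 1) * F x y ∂μ ∂ν :=
      lintegral_lintegral_swap (((hI.comp measurable_fst).pow_const _).mul hF).aemeasurable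
    _ ≤ ∫⁻ y, (∫⁻ x, (I x ^ (p - 1)) ^ q ∂μ) ^ (1 / q) * (∫⁻ x, F x y ^ p ∂μ) ^ (1 / p) ∂ν :=
      lintegral_mono fun y => ENNReal.lintegral_mul_le_Lp_mul_Lq μ hpq.symm
        (hI.pow_const _).aemeasurable (hF.comp measurable_prodMk_right).aemeasurable
    _ = A ^ (1 / q) * ∫⁻ y, (∫⁻ x, F x y ^ p ∂μ) ^ (1 / p) ∂ν := by
      simp_rw [← rpow_mul, hpq.sub_one_mul_conj]
      exact lintegral_const_mul' _ _ hAq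
  rcases eq_or_ne A 0 with hA0 | hA0
  · rw [hA0, zero_rpow_of_pos (one_div_pos.mpr (zero_lt_one.trans hp))]
    exact zero_le
  exact (ENNReal.mul_le_mul_iff_right (rpow_pos (pos_iff_ne_zero.mpr hA0) hA).ne' hAq).mp key

end Inequalities

section Convolution

variable {E : Type*} [MeasurableSpace E] [Add E] [MeasurableAdd₂ E] {μ ν : Measure E}

instance isProbabilityMeasure_mconv [IsProbabilityMeasure μ] [IsProbabilityMeasure ν] :
    IsProbabilityMeasure (mconv μ ν) :=
  Measure.isProbabilityMeasure_map measurable_add.aemeasurable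

theorem lintegral_mconv [SFinite ν] {F : E → ℝ≥0∞} (hF : Measurable F) :
    ∫⁻ z, F z ∂(mconv μ ν) = ∫⁻ x, ∫⁻ y, F (x + y) ∂ν ∂μ := by
  rw [mconv, lintegral_map hF measurable_add,
    lintegral_prod (fun z => F (z.1 + z.2)) (hF.comp measurable_add).aemeasurable]

theorem integral_mconv [SFinite μ] [SFinite ν] {g : E → ℝ} (hg : Integrable g (mconv μ ν)) :
    ∫ z, g z ∂(mconv μ ν) = ∫ y, ∫ x, g (x + y) ∂μ ∂ν := by
  rw [mconv] at hg ⊢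
  rw [integral_map measurable_add.aemeasurable hg.aestronglyMeasurable,
    integral_prod_symm (fun z : E × E => g (z.1 + z.2)) (hg.comp_measurable measurable_add)]

end Convolution

section Mehler

variable {E : Type*} [AddCommGroup E] [MeasurableSpace E]

/-- The operator `P_T` with noise measure `ρ`. -/
noncomputable def mehlerOp (T : E → E) (ρ : Measure E) (g : E → ℝ) (x : E) : ℝ :=
  ∫ z, g (T x + z) ∂ρ

def MehlerHypercontractive (T : E → E) (γ ρ : Measure E) (r p : ℝ) : Prop :=
  ∀ g : E → ℝ, Measurable g → (∃ C, ∀ x, |g x| ≤ C) →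
    (∫⁻ x, ENNReal.ofReal (|mehlerOp T ρ g x| ^ p) ∂γ) ^ (1 / p)
      ≤ (∫⁻ x, ENNReal.ofReal (|g x| ^ r) ∂γ) ^ (1 / r)

theorem abs_mehlerOp_le (T : E → E) {ρ : Measure E} [IsProbabilityMeasure ρ] {g : E → ℝ} {C : ℝ}
    (hC : ∀ x, |g x| ≤ C) (x : E) : |mehlerOp T ρ g x| ≤ C := by
  simpa [mehlerOp] using norm_integral_le_of_norm_le_const (μ := ρ) (f := fun z => g (T x + z))
    (.of_forall fun z => (Real.norm_eq_abs _).le.trans (hC _))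

theorem mehlerOp_add_apply {F : Type*} [FunLike F E E] [AddHomClass F E E] (T : F)
    (ρ : Measure E) (g : E → ℝ) (x y : E) :
    mehlerOp T ρ g (x + y) = mehlerOp T ρ (fun w => g (w + T y)) x := by
  simp only [mehlerOp, map_add, add_right_comm]

variable [MeasurableAdd₂ E]

theorem mehlerOp_mconv_apply (T : E → E) {ρ₁ ρ₂ : Measure E} [SFinite ρ₁] [SFinite ρ₂]
    {g : E → ℝ} {x : E} (hg : Integrable (fun z => g (T x + z)) (mconv ρ₁ ρ₂)) :
    mehlerOp T (mconv ρ₁ ρ₂) g x = ∫ v, mehlerOp T ρ₁ (fun w => g (w + v)) x ∂ρ₂ := by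
  simp only [mehlerOp, integral_mconv hg, add_assoc]

theorem measurable_mehlerOp_uncurry {T : E → E} (hT : Measurable T) {ρ : Measure E} [SFinite ρ]
    {β : Type*} [MeasurableSpace β] {G : β → E → ℝ} (hG : Measurable (Function.uncurry G)) :
    Measurable fun q : E × β => mehlerOp T ρ (G q.2) q.1 :=
  (hG.comp ((measurable_snd.comp measurable_fst).prodMk
    ((hT.comp (measurable_fst.comp measurable_fst)).add measurable_snd))).stronglyMeasurable
    |>.integral_prod_right'.measurable

variable {F : Type*} [FunLike F E E] [AddHomClass F E E] {T : F} {γ ρ₁ ρ₂ : Measure E}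
  [IsFiniteMeasure γ] [IsProbabilityMeasure ρ₁] [IsProbabilityMeasure ρ₂] {r p : ℝ}
  {f : E → ℝ} {C : ℝ}

theorem lintegral_Lp_mehlerOp_mconv_le (hT : Measurable T) (hp : 1 < p)
    (hyp : MehlerHypercontractive T γ ρ₁ r p) (hf : Measurable f) (hC : ∀ x, |f x| ≤ C) (y : E) :
    (∫⁻ x, ENNReal.ofReal |mehlerOp T (mconv ρ₁ ρ₂) f (x + y)| ^ p ∂γ) ^ (1 / p)
      ≤ ∫⁻ v, (∫⁻ x, ENNReal.ofReal (|f (x + T y + v)| ^ r) ∂γ) ^ (1 / r) ∂ρ₂ := by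
  have hp0 : 0 ≤ p := by linarith
  set G : E → E → ℝ≥0∞ := fun x v =>
    ENNReal.ofReal |mehlerOp T ρ₁ (fun w => f (w + T y + v)) x|
  have hG : Measurable (Function.uncurry G) :=
    (measurable_mehlerOp_uncurry hT (G := fun v w => f (w + T y + v)) (by fun_prop)).abs
      |>.ennreal_ofReal
  have hGC : ∀ x, ∫⁻ v, G x v ∂ρ₂ ≤ ENNReal.ofReal C := fun x => calc
    ∫⁻ v, G x v ∂ρ₂ ≤ ∫⁻ _, ENNReal.ofReal C ∂ρ₂ :=
      lintegral_mono fun v => ofReal_le_ofReal (abs_mehlerOp_le _ (fun w => hC _) x)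
    _ = ENNReal.ofReal C := by simp
  have hA : ∫⁻ x, (∫⁻ v, G x v ∂ρ₂) ^ p ∂γ ≠ ∞ := by
    refine ne_top_of_le_ne_top (b := ∫⁻ _, ENNReal.ofReal C ^ p ∂γ) ?_ ?_
    · simpa using mul_ne_top (rpow_ne_top_of_nonneg hp0 ofReal_ne_top) (measure_ne_top γ _)
    · exact lintegral_mono fun x => rpow_le_rpow (hGC x) hp0
  have htriangle : ∀ x, ENNReal.ofReal |mehlerOp T (mconv ρ₁ ρ₂) f (x + y)| ≤ ∫⁻ v, G x v ∂ρ₂ := by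
    intro x
    have hint : Integrable (fun z => f (T (x + y) + z)) (mconv ρ₁ ρ₂) :=
      .of_bound (by fun_prop : Measurable _).aestronglyMeasurable C (.of_forall fun z => hC _)
    simp only [mehlerOp_mconv_apply T hint, mehlerOp_add_apply T, G, ← Real.enorm_eq_ofReal_abs]
    exact enorm_integral_le_lintegral_enorm _
  calc (∫⁻ x, ENNReal.ofReal |mehlerOp T (mconv ρ₁ ρ₂) f (x + y)| ^ p ∂γ) ^ (1 / p)
      ≤ (∫⁻ x, (∫⁻ v, G x v ∂ρ₂) ^ p ∂γ) ^ (1 / p) := by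
        gcongr with x
        exact htriangle x
    _ ≤ ∫⁻ v, (∫⁻ x, G x v ^ p ∂γ) ^ (1 / p) ∂ρ₂ := lintegral_Lp_lintegral_le hp hG hA
    _ ≤ ∫⁻ v, (∫⁻ x, ENNReal.ofReal (|f (x + T y + v)| ^ r) ∂γ) ^ (1 / r) ∂ρ₂ := by
        gcongr with v
        simp only [G, ofReal_rpow_of_nonneg (abs_nonneg _) hp0]
        exact hyp _ (by fun_prop) ⟨C, fun w => hC _⟩

theorem lintegral_Lp_rpow_mehlerOp_mconv_le (hT : Measurable T) (hr : 1 < r) (hrp : r ≤ p)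
    (hyp : MehlerHypercontractive T γ ρ₁ r p) (hf : Measurable f) (hC : ∀ x, |f x| ≤ C) (y : E) :
    (∫⁻ x, ENNReal.ofReal |mehlerOp T (mconv ρ₁ ρ₂) f (x + y)| ^ p ∂γ) ^ (r / p)
      ≤ ∫⁻ v, ∫⁻ x, ENNReal.ofReal (|f (x + T y + v)| ^ r) ∂γ ∂ρ₂ := calc
  _ = ((∫⁻ x, ENNReal.ofReal |mehlerOp T (mconv ρ₁ ρ₂) f (x + y)| ^ p ∂γ) ^ (1 / p)) ^ r := by
      rw [← rpow_mul, one_div_mul_eq_div]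
  _ ≤ (∫⁻ v, (∫⁻ x, ENNReal.ofReal (|f (x + T y + v)| ^ r) ∂γ) ^ (1 / r) ∂ρ₂) ^ r :=
      rpow_le_rpow (lintegral_Lp_mehlerOp_mconv_le hT (hr.trans_le hrp) hyp hf hC y) (by linarith)
  _ ≤ ∫⁻ v, ∫⁻ x, ENNReal.ofReal (|f (x + T y + v)| ^ r) ∂γ ∂ρ₂ :=
      rpow_lintegral_rpow_one_div_le
        (Measurable.lintegral_prod_right'
          (f := fun q : E × E => ENNReal.ofReal (|f (q.2 + T y + q.1)| ^ r))
          (by fun_prop)).aemeasurable hr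

end Mehler

theorem PT_hypercontractive_Lr_to_mixed_general
    {E : Type*} [NormedAddCommGroup E] [NormedSpace ℝ E]
    [TopologicalSpace.SeparableSpace E] [MeasurableSpace E] [BorelSpace E]
    (T : E →L[ℝ] E) (γ π ργ ρπ : Measure E)
    [IsProbabilityMeasure γ] [IsProbabilityMeasure π]
    [IsProbabilityMeasure ργ] [IsProbabilityMeasure ρπ]
    (hπ : mconv (π.map T) ρπ = π)
    (r p : ℝ) (hr : 1 < r) (hrp : r ≤ p)
    (hhyper : ∀ g : E → ℝ, Measurable g → (∃ C, ∀ x, |g x| ≤ C) →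
      (∫⁻ x, ENNReal.ofReal (|∫ z, g (T x + z) ∂ργ| ^ p) ∂γ) ^ (1 / p)
        ≤ (∫⁻ x, ENNReal.ofReal (|g x| ^ r) ∂γ) ^ (1 / r))
    (f : E → ℝ) (hf : Measurable f) (hfb : ∃ C, ∀ x, |f x| ≤ C) :
    mixedNorm p r γ π (fun x => ∫ z, f (T x + z) ∂(mconv ργ ρπ))
      ≤ (∫⁻ x, ENNReal.ofReal (|f x| ^ r) ∂(mconv γ π)) ^ (1 / r) := by
  obtain ⟨C, hC⟩ := hfb
  have hT : Measurable T := T.continuous.measurable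
  set H : E → ℝ≥0∞ := fun w => ∫⁻ x, ENNReal.ofReal (|f (x + w)| ^ r) ∂γ
  have hH : Measurable H := Measurable.lintegral_prod_right'
    (f := fun q : E × E => ENNReal.ofReal (|f (q.2 + q.1)| ^ r)) (by fun_prop)
  have hfγπ : ∫⁻ x, ENNReal.ofReal (|f x| ^ r) ∂(mconv γ π) = ∫⁻ w, H w ∂π := by
    rw [lintegral_mconv (by fun_prop), lintegral_lintegral_swap (by fun_prop)]
  have hHπ : ∫⁻ w, H w ∂π = ∫⁻ y, ∫⁻ v, H (T y + v) ∂ρπ ∂π := by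
    conv_lhs => rw [← hπ]
    rw [lintegral_mconv hH, lintegral_map (f := fun x => ∫⁻ v, H (x + v) ∂ρπ)
      (Measurable.lintegral_prod_right' (f := fun q : E × E => H (q.1 + q.2))
        (hH.comp measurable_add)) hT]
  rw [hfγπ, hHπ, mixedNorm]
  gcongr with y
  simpa only [H, mehlerOp, add_assoc] using
    lintegral_Lp_rpow_mehlerOp_mconv_le hT hr hrp hhyper hf hC y

/-- Hypercontractivity type estimate: if the Gaussian factor of `P_T` is `L^r(γ)`–`L^p(γ)`
hypercontractive, then `‖P_T f‖_{p,r} ≤ ‖f‖_{L^r(γ∗π)}` for all bounded Borel `f`. -/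
theorem PT_hypercontractive_Lr_to_mixed
    {E : Type*} [NormedAddCommGroup E] [NormedSpace ℝ E] [CompleteSpace E]
    [TopologicalSpace.SeparableSpace E] [MeasurableSpace E] [BorelSpace E]
    (T : E →L[ℝ] E) (γ π ργ ρπ : Measure E)
    [IsProbabilityMeasure γ] [IsProbabilityMeasure π]
    [IsProbabilityMeasure ργ] [IsProbabilityMeasure ρπ]
    (hγ : mconv (γ.map T) ργ = γ) (hπ : mconv (π.map T) ρπ = π)
    (r p : ℝ) (hr : 1 < r) (hrp : r ≤ p)
    (hhyper : ∀ g : E → ℝ, Measurable g → (∃ C, ∀ x, |g x| ≤ C) →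
      (∫⁻ x, ENNReal.ofReal (|∫ z, g (T x + z) ∂ργ| ^ p) ∂γ) ^ (1 / p)
        ≤ (∫⁻ x, ENNReal.ofReal (|g x| ^ r) ∂γ) ^ (1 / r))
    (f : E → ℝ) (hf : Measurable f) (hfb : ∃ C, ∀ x, |f x| ≤ C) :
    mixedNorm p r γ π (fun x => ∫ z, f (T x + z) ∂(mconv ργ ρπ))
      ≤ (∫⁻ x, ENNReal.ofReal (|f x| ^ r) ∂(mconv γ π)) ^ (1 / r) :=
  PT_hypercontractive_Lr_to_mixed_general T γ π ργ ρπ hπ r p hr hrp hhyper f hf hfb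
end
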